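/- Let T be a table with suppressed cell set E, total graph H' = (A, B, E'), and suppressed graph H = (A, B, E). Let P ⊆ E' − E. If P satisfies Property N1 (every connected component of (A, B, E ∪ P) is strongly connected) and Property N2 (for every connected component D of H, all vertices of D lie in a single connected component of (A, B, P)), then E is totally protected in the table T̄_P obtained from T by additionally suppressing the cells in P. -/

import Mathlib

/-- A two-dimensional table: values, lower/upper bounds, and a set of suppressed cells. -/
structure Table (R C : Type*) where
  val : R × C → ℝ
  lo : R × C → ℝ
  hi : R × C → ℝ
  sup : Set (R × C)
  lo_le : ∀ e, lo e ≤ val e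
  le_hi : ∀ e, val e ≤ hi e
  lo_lt_hi : ∀ e, lo e < hi e

variable {R C : Type*}

/-- A bounded feasible assignment of a table. -/
def BFA [Fintype R] [Fintype C] (T : Table R C) (x : R × C → ℝ) : Prop :=
  (∀ e, e ∉ T.sup → x e = T.val e) ∧
  (∀ e ∈ T.sup, T.lo e ≤ x e ∧ x e ≤ T.hi e) ∧
  (∀ i : R, ∑ j, x (i, j) = ∑ j, T.val (i, j)) ∧
  (∀ j : C, ∑ i, x (i, j) = ∑ i, T.val (i, j))

/-- One traversable step in the mixed graph with edge set `S`: the edge of a cell `e`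
may be traversed from its row endpoint to its column endpoint iff `val e < hi e`,
and from its column endpoint to its row endpoint iff `lo e < val e`. -/
def MStep (T : Table R C) (S : Set (R × C)) (v w : R ⊕ C) : Prop :=
  ∃ e ∈ S, (T.val e < T.hi e ∧ v = Sum.inl e.1 ∧ w = Sum.inr e.2) ∨
           (T.lo e < T.val e ∧ v = Sum.inr e.2 ∧ w = Sum.inl e.1)

/-- Reachability along traversable paths in the mixed graph with edge set `S`. -/
def MReach (T : Table R C) (S : Set (R × C)) : (R ⊕ C) → (R ⊕ C) → Prop :=
  Relation.ReflTransGen (MStep T S)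

/-- Mutual reachability in the mixed graph with edge set `S`. -/
def MutReach (T : Table R C) (S : Set (R × C)) (v w : R ⊕ C) : Prop :=
  MReach T S v w ∧ MReach T S w v

/-- `D` is a strongly connected component of the mixed graph with edge set `S`:
an equivalence class of mutual reachability. -/
def IsSCC (T : Table R C) (S : Set (R × C)) (D : Set (R ⊕ C)) : Prop :=
  ∃ v, D = {w | MutReach T S v w}

/-- Direction-blind adjacency via an edge in `S`. -/
def Adj (S : Set (R × C)) (v w : R ⊕ C) : Prop :=
  ∃ e ∈ S, (v = Sum.inl e.1 ∧ w = Sum.inr e.2) ∨ (v = Sum.inr e.2 ∧ w = Sum.inl e.1)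

/-- Direction-blind connectivity via edges in `S`. -/
def Conn (S : Set (R × C)) : (R ⊕ C) → (R ⊕ C) → Prop :=
  Relation.ReflTransGen (Adj S)

/-- `D` is a connected component of the (direction-blind) graph with edge set `S`. -/
def IsCC (S : Set (R × C)) (D : Set (R ⊕ C)) : Prop :=
  ∃ v, D = {w | Conn S v w}

/-- The edges of `S` with both endpoints in the vertex set `D`. -/
def EdgesIn (S : Set (R × C)) (D : Set (R ⊕ C)) : Set (R × C) :=
  {e | e ∈ S ∧ Sum.inl e.1 ∈ D ∧ Sum.inr e.2 ∈ D}

/-- All vertices of `D` are joined by direction-blind paths using edges in `S`. -/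
def ConnectedOn (S : Set (R × C)) (D : Set (R ⊕ C)) : Prop :=
  ∀ v ∈ D, ∀ w ∈ D, Conn S v w

/-- `F` is entire: it is the sum of a power series centered at some point with
infinite radius of convergence. -/
def Entire {ι : Type*} [Fintype ι] (F : (ι → ℝ) → ℝ) : Prop :=
  ∃ (p : FormalMultilinearSeries ℝ (ι → ℝ) ℝ) (c : ι → ℝ),
    HasFPowerSeriesOnBall F p c ⊤

/-- `F x` depends only on the coordinates `x e` with `e ∈ S`. -/
def DependsOnlyOn {ι : Type*} (F : (ι → ℝ) → ℝ) (S : Set ι) : Prop :=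
  ∀ x y : ι → ℝ, (∀ e ∈ S, x e = y e) → F x = F y

/-- `S` is the effective area of `F`: the smallest set of coordinates that `F`
depends on. -/
def IsEA {ι : Type*} (F : (ι → ℝ) → ℝ) (S : Set ι) : Prop :=
  DependsOnlyOn F S ∧ ∀ S', DependsOnlyOn F S' → S ⊆ S'

/-- `F` takes the same value at every bounded feasible assignment of `T`. -/
def TableInvariant [Fintype R] [Fintype C] (T : Table R C) (F : (R × C → ℝ) → ℝ) : Prop :=
  ∀ x y, BFA T x → BFA T y → F x = F y

/-- `Q` is totally protected in `T`: there is no nonconstant analytic invariant of `T`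
whose effective area is contained in `Q`. -/
def TotallyProtected [Fintype R] [Fintype C] (T : Table R C) (Q : Set (R × C)) : Prop :=
  ¬ ∃ (F : (R × C → ℝ) → ℝ) (S : Set (R × C)),
      Entire F ∧ DependsOnlyOn F T.sup ∧ TableInvariant T F ∧
      IsEA F S ∧ S ⊆ Q ∧ S.Nonempty

/-- The table obtained from `T` by additionally suppressing the cells in `P`. -/
def Table.addSup (T : Table R C) (P : Set (R × C)) : Table R C :=
  { T with sup := T.sup ∪ P }

/-!
Let `W` be the span of the feasible circulations of `T̄_P`: divergence-free flows on its
suppressed cells that raise a cell only if it is below its upper bound and lower it only if it is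
above its lower bound. Adding a small nonnegative combination of feasible circulations to the
published values gives a bounded feasible assignment, so an analytic invariant `F` is constant on
an open piece of `val + W`, hence on all of `val + W` by the identity theorem.

By Property N1, two feasible flows with the same ends differ by an element of `W`. For a cell
`e ∈ E`, Property N2 gives a path in `P` joining the ends of `e`; closing it up with `e` yields,
modulo `W`, a feasible cycle, so `W` contains a vector that is `1` at `e` and vanishes on the rest
of `E`. Hence `W` maps onto `ℝ^E`, an invariant depending only on cells of `E` is constant, and its
effective area is empty.
-/

open Function Filter Topology Set

theorem AnalyticOnNhd.apply_add_eq_of_mem_span {E F : Type*} [NormedAddCommGroup E]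
    [NormedSpace ℝ E] [FiniteDimensional ℝ E] [NormedAddCommGroup F] [NormedSpace ℝ F]
    {f : E → F} (hf : AnalyticOnNhd ℝ f univ) {K : PointedCone ℝ E} {x₀ : E}
    (hK : ∀ᶠ w in 𝓝 0, w ∈ K → f (x₀ + w) = f x₀) {w : E}
    (hw : w ∈ Submodule.span ℝ (K : Set E)) : f (x₀ + w) = f x₀ := by
  obtain ⟨s, hsK, hspan, hli⟩ := exists_linearIndependent ℝ (K : Set E)
  have := hli.setFinite.fintype
  let L : (s → ℝ) →L[ℝ] E :=
    LinearMap.toContinuousLinearMap (Fintype.linearCombination ℝ ((↑) : s → E))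
  have hL : ∀ᶠ c in 𝓝 0, (∀ i, 0 ≤ c i) → f (x₀ + L c) = f x₀ := by
    have hL0 : Tendsto L (𝓝 0) (𝓝 0) := map_zero L ▸ L.continuous.tendsto 0
    filter_upwards [hL0.eventually hK] with c hc hpos
    refine hc ?_
    simp only [L, LinearMap.coe_toContinuousLinearMap', Fintype.linearCombination_apply]
    exact Submodule.sum_mem _ fun i _ => K.smul_mem (hpos i) (hsK i.2)
  obtain ⟨r, hr, hball⟩ := Metric.eventually_nhds_iff_ball.1 hL
  -- a small ball around `fun _ => r / 2` lies in the positive orthant and in the ball of `hL`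
  have hc₀ : (fun c => f (x₀ + L c)) =ᶠ[𝓝 fun _ => r / 2] fun _ => f x₀ := by
    filter_upwards [Metric.ball_mem_nhds _ (half_pos hr)] with c hc
    have hci : ∀ i, |c i - r / 2| < r / 2 := fun i =>
      (dist_le_pi_dist c (fun _ => r / 2) i).trans_lt hc
    refine hball c (mem_ball_zero_iff.2 ((pi_norm_lt_iff hr).2 fun i => ?_)) fun i => ?_
    · rw [Real.norm_eq_abs, abs_lt]; constructor <;> linarith [abs_lt.1 (hci i)]
    · linarith [abs_lt.1 (hci i)]
  have hA : AnalyticOnNhd ℝ (fun c => f (x₀ + L c)) univ :=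
    hf.comp (fun c _ => analyticAt_const.add (L.analyticAt c)) (mapsTo_univ _ _)
  obtain ⟨c, rfl⟩ : w ∈ LinearMap.range (Fintype.linearCombination ℝ ((↑) : s → E)) := by
    rwa [Fintype.range_linearCombination, Subtype.range_coe, hspan]
  exact hA.eqOn_of_preconnected_of_eventuallyEq analyticOnNhd_const isPreconnected_univ
    (mem_univ _) hc₀ (mem_univ c)

lemma Entire.analyticOnNhd {ι : Type*} [Fintype ι] {F : (ι → ℝ) → ℝ} (hF : Entire F) :
    AnalyticOnNhd ℝ F univ := by
  obtain ⟨p, c, hp⟩ := hF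
  simpa [Metric.eball_top_eq_univ] using hp.analyticOnNhd

lemma Submodule.exists_mem_eqOn_of_single {ι : Type*} [Finite ι] [DecidableEq ι]
    (W : Submodule ℝ (ι → ℝ)) (Q : Set ι)
    (hW : ∀ e ∈ Q, ∃ w ∈ W, ∀ f ∈ Q, w f = (Pi.single e 1 : ι → ℝ) f) (y : ι → ℝ) :
    ∃ w ∈ W, ∀ f ∈ Q, w f = y f := by
  have htop : W.map (LinearMap.funLeft ℝ ℝ ((↑) : Q → ι)) = ⊤ := by
    rw [eq_top_iff, ← (Pi.basisFun ℝ Q).span_eq, Submodule.span_le]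
    rintro _ ⟨⟨e, he⟩, rfl⟩
    obtain ⟨w, hw, hwe⟩ := hW e he
    refine ⟨w, hw, funext fun f => ?_⟩
    simp [hwe f f.2, Pi.single_apply, Subtype.ext_iff]
  obtain ⟨w, hw, hwy⟩ := htop.ge (Submodule.mem_top (x := fun f : Q => y f))
  exact ⟨w, hw, fun f hf => congrFun hwy ⟨f, hf⟩⟩

lemma Adj.symm {S : Set (R × C)} {u v : R ⊕ C} (h : Adj S u v) : Adj S v u :=
  let ⟨e, he, h⟩ := h
  ⟨e, he, h.symm.imp (fun h => ⟨h.2, h.1⟩) (fun h => ⟨h.2, h.1⟩)⟩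

lemma Conn.symm {S : Set (R × C)} {u v : R ⊕ C} (h : Conn S u v) : Conn S v u := by
  induction h with
  | refl => exact .refl
  | tail _ hab ih => exact ih.head (Adj.symm hab)

lemma Conn.mono {S S' : Set (R × C)} (hS : S ⊆ S') {u v : R ⊕ C} (h : Conn S u v) :
    Conn S' u v :=
  Relation.ReflTransGen.mono (fun _ _ ⟨e, he, h⟩ => ⟨e, hS he, h⟩) _ _ h

section Divergence

variable [Fintype R] [Fintype C]

/-- A value `g e` on the cell `e = (i, j)` is a flow from the row vertex `i` to the column
vertex `j`; `divergence g` is the net outflow at each vertex. -/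
noncomputable def divergence : (R × C → ℝ) →ₗ[ℝ] (R ⊕ C → ℝ) where
  toFun g := Sum.elim (fun i => ∑ j, g (i, j)) (fun j => -∑ i, g (i, j))
  map_add' g h := by ext (i | j) <;> simp [Finset.sum_add_distrib, add_comm]
  map_smul' c g := by ext (i | j) <;> simp [Finset.mul_sum]

@[simp]
lemma divergence_inl (g : R × C → ℝ) (i : R) : divergence g (Sum.inl i) = ∑ j, g (i, j) := rfl

@[simp]
lemma divergence_inr (g : R × C → ℝ) (j : C) : divergence g (Sum.inr j) = -∑ i, g (i, j) := rfl

lemma divergence_single [DecidableEq R] [DecidableEq C] (e : R × C) :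
    divergence (Pi.single e 1) = Pi.single (Sum.inl e.1) 1 - Pi.single (Sum.inr e.2) 1 := by
  ext (i | j) <;> simp [Pi.single_apply, Prod.ext_iff, ite_and, eq_comm]

end Divergence

namespace Table

variable (T : Table R C) (S : Set (R × C))

def IsFeasibleDir (g : R × C → ℝ) : Prop :=
  support g ⊆ S ∧ (∀ e, 0 < g e → T.val e < T.hi e) ∧ (∀ e, g e < 0 → T.lo e < T.val e)

variable {T S}

lemma IsFeasibleDir.zero : T.IsFeasibleDir S 0 :=
  ⟨by simp, fun _ h => (lt_irrefl _ h).elim, fun _ h => (lt_irrefl _ h).elim⟩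

lemma IsFeasibleDir.add {g h : R × C → ℝ} (hg : T.IsFeasibleDir S g) (hh : T.IsFeasibleDir S h) :
    T.IsFeasibleDir S (g + h) := by
  refine ⟨(support_add g h).trans (union_subset hg.1 hh.1), fun e he => ?_, fun e he => ?_⟩
  · rcases lt_or_ge 0 (g e) with hge | hge
    · exact hg.2.1 e hge
    · exact hh.2.1 e (by simp only [Pi.add_apply] at he; linarith)
  · rcases lt_or_ge (g e) 0 with hge | hge
    · exact hg.2.2 e hge
    · exact hh.2.2 e (by simp only [Pi.add_apply] at he; linarith)

lemma IsFeasibleDir.smul {g : R × C → ℝ} (hg : T.IsFeasibleDir S g) {c : ℝ} (hc : 0 ≤ c) :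
    T.IsFeasibleDir S (c • g) :=
  ⟨(support_const_smul_subset c g).trans hg.1,
    fun e he => hg.2.1 e (pos_of_mul_pos_right he hc),
    fun e he => hg.2.2 e (neg_of_mul_neg_right he hc)⟩

lemma IsFeasibleDir.mono {S' : Set (R × C)} (hS : S ⊆ S') {g : R × C → ℝ}
    (hg : T.IsFeasibleDir S g) : T.IsFeasibleDir S' g :=
  ⟨hg.1.trans hS, hg.2⟩

variable (T S) [Fintype R] [Fintype C]

def feasibleCirculations : PointedCone ℝ (R × C → ℝ) where
  carrier := {g | T.IsFeasibleDir S g ∧ divergence g = 0}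
  add_mem' := fun ⟨hg, hg0⟩ ⟨hh, hh0⟩ => ⟨hg.add hh, by rw [map_add, hg0, hh0, add_zero]⟩
  zero_mem' := ⟨.zero, map_zero _⟩
  smul_mem' := fun c _ ⟨hg, hg0⟩ =>
    ⟨hg.smul c.2, by rw [Nonneg.mk_smul, map_smul, hg0, smul_zero]⟩

def feasibleSpan : Submodule ℝ (R × C → ℝ) :=
  Submodule.span ℝ (T.feasibleCirculations S)

lemma bfa_val : BFA T T.val :=
  ⟨fun _ _ => rfl, fun e _ => ⟨T.lo_le e, T.le_hi e⟩, fun _ => rfl, fun _ => rfl⟩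

lemma bfa_val_add {g : R × C → ℝ} (hg : g ∈ T.feasibleCirculations T.sup)
    (hbounds : ∀ e, T.lo e ≤ T.val e + g e ∧ T.val e + g e ≤ T.hi e) :
    BFA T (T.val + g) := by
  obtain ⟨hfeas, hdiv⟩ := hg
  refine ⟨fun e he => ?_, fun e _ => hbounds e, fun i => ?_, fun j => ?_⟩
  · simp [notMem_support.1 (fun h => he (hfeas.1 h))]
  · simpa [Finset.sum_add_distrib] using congrFun hdiv (Sum.inl i)
  · simpa [Finset.sum_add_distrib] using congrFun hdiv (Sum.inr j)

lemma eventually_bounds :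
    ∀ᶠ g in 𝓝 (0 : R × C → ℝ), T.IsFeasibleDir S g →
      ∀ e, T.lo e ≤ T.val e + g e ∧ T.val e + g e ≤ T.hi e := by
  have hslack : ∀ e, ∀ᶠ g in 𝓝 (0 : R × C → ℝ),
      (T.val e < T.hi e → g e ≤ T.hi e - T.val e) ∧
      (T.lo e < T.val e → T.lo e - T.val e ≤ g e) := by
    intro e
    have hg : Tendsto (fun g : R × C → ℝ => g e) (𝓝 0) (𝓝 0) := (continuous_apply e).tendsto 0
    exact
      (eventually_imp_distrib_left.2 fun h => hg.eventually (eventually_le_nhds (sub_pos.2 h))).and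
      (eventually_imp_distrib_left.2 fun h => hg.eventually (eventually_ge_nhds (sub_neg.2 h)))
  filter_upwards [eventually_all.2 hslack] with g hg hfeas e
  have := T.lo_le e
  have := T.le_hi e
  constructor
  · rcases lt_or_ge (g e) 0 with hneg | hnn
    · linarith [(hg e).2 (hfeas.2.2 e hneg)]
    · linarith
  · rcases lt_or_ge 0 (g e) with hpos | hnp
    · linarith [(hg e).1 (hfeas.2.1 e hpos)]
    · linarith

theorem apply_val_add_eq_of_mem_feasibleSpan {F : (R × C → ℝ) → ℝ} (hF : Entire F)
    (hinv : TableInvariant T F) {w : R × C → ℝ} (hw : w ∈ T.feasibleSpan T.sup) :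
    F (T.val + w) = F T.val :=
  hF.analyticOnNhd.apply_add_eq_of_mem_span
    (by filter_upwards [T.eventually_bounds T.sup] with g hb hg using
      hinv _ _ (T.bfa_val_add hg (hb hg.1)) T.bfa_val) hw

variable {T S} [DecidableEq R] [DecidableEq C]

variable (T S) in
def IsFeasibleFlow (u v : R ⊕ C) (g : R × C → ℝ) : Prop :=
  T.IsFeasibleDir S g ∧ divergence g = Pi.single u 1 - Pi.single v 1

lemma IsFeasibleFlow.mono {S' : Set (R × C)} (hS : S ⊆ S') {u v : R ⊕ C} {g : R × C → ℝ}
    (hg : T.IsFeasibleFlow S u v g) : T.IsFeasibleFlow S' u v g :=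
  ⟨hg.1.mono hS, hg.2⟩

lemma IsFeasibleFlow.trans {u v w : R ⊕ C} {g h : R × C → ℝ} (hg : T.IsFeasibleFlow S u v g)
    (hh : T.IsFeasibleFlow S v w h) : T.IsFeasibleFlow S u w (g + h) :=
  ⟨hg.1.add hh.1, by rw [map_add, hg.2, hh.2]; abel⟩

lemma IsFeasibleFlow.add_mem_feasibleCirculations {u v : R ⊕ C} {g h : R × C → ℝ}
    (hg : T.IsFeasibleFlow S u v g) (hh : T.IsFeasibleFlow S v u h) :
    g + h ∈ T.feasibleCirculations S :=
  ⟨(hg.trans hh).1, by rw [(hg.trans hh).2, sub_self]⟩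

lemma isFeasibleFlow_single {e : R × C} (he : e ∈ S) (hlt : T.val e < T.hi e) :
    T.IsFeasibleFlow S (Sum.inl e.1) (Sum.inr e.2) (Pi.single e 1) := by
  have hnn : ∀ f, 0 ≤ (Pi.single e 1 : R × C → ℝ) f := fun f => by
    by_cases h : f = e <;> simp [h]
  refine ⟨⟨Pi.support_single_subset.trans (singleton_subset_iff.2 he), fun f hf => ?_,
    fun f hf => absurd (hnn f) hf.not_ge⟩, divergence_single e⟩
  obtain rfl : f = e := by by_contra h; simp [h] at hf
  exact hlt

lemma isFeasibleFlow_neg_single {e : R × C} (he : e ∈ S) (hlt : T.lo e < T.val e) :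
    T.IsFeasibleFlow S (Sum.inr e.2) (Sum.inl e.1) (-Pi.single e 1) := by
  have hnn : ∀ f, 0 ≤ (Pi.single e 1 : R × C → ℝ) f := fun f => by
    by_cases h : f = e <;> simp [h]
  refine ⟨⟨(support_neg _).trans_subset (Pi.support_single_subset.trans
    (singleton_subset_iff.2 he)), fun f hf => absurd (neg_nonpos.2 (hnn f)) hf.not_ge,
    fun f hf => ?_⟩, by rw [map_neg, divergence_single, neg_sub]⟩
  obtain rfl : f = e := by by_contra h; simp [h] at hf
  exact hlt

lemma isFeasibleFlow_single_or {e : R × C} (he : e ∈ S) :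
    T.IsFeasibleFlow S (Sum.inl e.1) (Sum.inr e.2) (Pi.single e 1) ∨
      T.IsFeasibleFlow S (Sum.inr e.2) (Sum.inl e.1) (-Pi.single e 1) := by
  rcases lt_or_ge (T.val e) (T.hi e) with h | h
  · exact .inl (isFeasibleFlow_single he h)
  · exact .inr (isFeasibleFlow_neg_single he (by linarith [T.lo_lt_hi e]))

lemma exists_isFeasibleFlow_of_mReach {u v : R ⊕ C} (h : MReach T S u v) :
    ∃ g, T.IsFeasibleFlow S u v g := by
  induction h with
  | refl => exact ⟨0, .zero, by rw [map_zero, sub_self]⟩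
  | tail _ hstep ih =>
    obtain ⟨g, hg⟩ := ih
    obtain ⟨e, he, ⟨hlt, rfl, rfl⟩ | ⟨hlt, rfl, rfl⟩⟩ := hstep
    · exact ⟨_, hg.trans (isFeasibleFlow_single he hlt)⟩
    · exact ⟨_, hg.trans (isFeasibleFlow_neg_single he hlt)⟩

lemma exists_isFeasibleFlow_of_adj {u v : R ⊕ C} (h : Adj S u v) :
    ∃ χ, T.IsFeasibleFlow S u v χ ∨ T.IsFeasibleFlow S v u (-χ) := by
  obtain ⟨e, he, ⟨rfl, rfl⟩ | ⟨rfl, rfl⟩⟩ := h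
  · exact ⟨_, isFeasibleFlow_single_or he⟩
  · exact ⟨-Pi.single e 1, by rw [neg_neg]; exact (isFeasibleFlow_single_or he).symm⟩

lemma IsFeasibleFlow.sub_mem_feasibleSpan {u v : R ⊕ C} {g g' : R × C → ℝ}
    (hg : T.IsFeasibleFlow S u v g) (hg' : T.IsFeasibleFlow S u v g') (hvu : MReach T S v u) :
    g - g' ∈ T.feasibleSpan S := by
  obtain ⟨r, hr⟩ := exists_isFeasibleFlow_of_mReach hvu
  rw [show g - g' = (g + r) - (g' + r) by abel]
  exact sub_mem (Submodule.subset_span (hg.add_mem_feasibleCirculations hr))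
    (Submodule.subset_span (hg'.add_mem_feasibleCirculations hr))

lemma exists_sub_mem_feasibleSpan_of_conn (hS : ∀ u v, Conn S u v → MReach T S u v)
    {S' : Set (R × C)} (hS' : S' ⊆ S) {u v : R ⊕ C} (h : Conn S' u v) :
    ∃ p, support p ⊆ S' ∧ ∃ q, T.IsFeasibleFlow S u v q ∧ p - q ∈ T.feasibleSpan S := by
  induction h with
  | refl => exact ⟨0, by simp, 0, ⟨.zero, by rw [map_zero, sub_self]⟩, by simp⟩
  | @tail b w hub hbw ih =>
    obtain ⟨p, hp, q, hq, hpq⟩ := ih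
    obtain ⟨χ, hχ | hχ⟩ := exists_isFeasibleFlow_of_adj hbw
    · refine ⟨p + χ, (support_add _ _).trans (union_subset hp hχ.1.1), q + χ,
        hq.trans (hχ.mono hS'), by rwa [add_sub_add_right_eq_sub]⟩
    · -- `χ` is not traversable from `b` to `w`: compare `q` with a feasible flow `q'` from `u` to
      -- `w` (it exists by `hS`), as `q' - χ` is another feasible flow from `u` to `b`.
      have hub' := Conn.mono hS' hub
      obtain ⟨q', hq'⟩ := exists_isFeasibleFlow_of_mReach
        (hS u w (Relation.ReflTransGen.trans hub' (Conn.mono hS' (.single hbw))))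
      refine ⟨p + χ, (support_add _ _).trans (union_subset hp ?_), q', hq', ?_⟩
      · simpa using hχ.1.1
      rw [show p + χ - q' = (p - q) + (q - (q' + -χ)) by abel]
      exact add_mem hpq
        (hq.sub_mem_feasibleSpan (hq'.trans (hχ.mono hS')) (hS b u (Conn.symm hub')))

lemma exists_mem_feasibleSpan_support_sub_single_subset
    (hS : ∀ u v, Conn S u v → MReach T S u v) {P : Set (R × C)} (hP : P ⊆ S) {e : R × C}
    (he : e ∈ S) (hconn : Conn P (Sum.inl e.1) (Sum.inr e.2)) :
    ∃ w ∈ T.feasibleSpan S, support (w - Pi.single e 1) ⊆ P := by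
  rcases isFeasibleFlow_single_or he with hχ | hχ
  · obtain ⟨p, hp, q, hq, hpq⟩ := exists_sub_mem_feasibleSpan_of_conn hS hP (Conn.symm hconn)
    refine ⟨Pi.single e 1 + p, ?_, by simpa using hp⟩
    rw [show Pi.single e 1 + p = (Pi.single e 1 + q) + (p - q) by abel]
    exact add_mem (Submodule.subset_span (hχ.add_mem_feasibleCirculations hq)) hpq
  · obtain ⟨p, hp, q, hq, hpq⟩ := exists_sub_mem_feasibleSpan_of_conn hS hP hconn
    refine ⟨-(-Pi.single e 1 + p), ?_, by simpa using hp⟩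
    rw [show -Pi.single e 1 + p = (-Pi.single e 1 + q) + (p - q) by abel]
    exact neg_mem (add_mem (Submodule.subset_span (hχ.add_mem_feasibleCirculations hq)) hpq)

end Table

theorem stmt9_general [Fintype R] [Fintype C]
    (T : Table R C) (P : Set (R × C)) (hP : ∀ e ∈ P, e ∉ T.sup)
    (hN1 : ∀ D : Set (R ⊕ C), IsCC (T.sup ∪ P) D →
      ∀ v ∈ D, ∀ w ∈ D, MutReach T (T.sup ∪ P) v w)
    (hN2 : ∀ D : Set (R ⊕ C), IsCC T.sup D → ∀ v ∈ D, ∀ w ∈ D, Conn P v w) :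
    TotallyProtected (T.addSup P) T.sup := by
  classical
  rintro ⟨F, S, hF, -, hinv, ⟨hdS, hmin⟩, hSE, hSne⟩
  have hunit : ∀ e ∈ T.sup, ∃ w ∈ (T.addSup P).feasibleSpan (T.addSup P).sup,
      ∀ f ∈ T.sup, w f = (Pi.single e 1 : R × C → ℝ) f := by
    intro e he
    obtain ⟨w, hw, hsupp⟩ := T.exists_mem_feasibleSpan_support_sub_single_subset
      (fun u v h => (hN1 _ ⟨u, rfl⟩ u .refl v h).1) subset_union_right (.inl he)
      (hN2 _ ⟨_, rfl⟩ _ .refl _ (.single ⟨e, he, .inl ⟨rfl, rfl⟩⟩))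
    exact ⟨w, hw, fun f hf => by_contra fun hne => hP f (hsupp (sub_ne_zero.2 hne)) hf⟩
  have hconst : ∀ x, F x = F T.val := fun x => by
    obtain ⟨w, hw, hwx⟩ := Submodule.exists_mem_eqOn_of_single _ _ hunit (x - T.val)
    calc F x = F (T.val + w) := hdS _ _ fun f hf => by simp [hwx f (hSE hf)]
      _ = F T.val := (T.addSup P).apply_val_add_eq_of_mem_feasibleSpan hF hinv hw
  exact hSne.ne_empty (subset_empty_iff.1 (hmin ∅ fun x y _ => (hconst x).trans (hconst y).symm))

/-- If `P ⊆ E' - E` satisfies Property N1 (every connected component of the mixed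
graph with edge set `E ∪ P` is strongly connected) and Property N2 (the vertices of
each connected component of the suppressed graph are connected in `(A, B, P)`),
then `E` is totally protected in the table obtained by also suppressing `P`. -/
theorem stmt9 [Fintype R] [Fintype C] [Nonempty R] [Nonempty C]
    (T : Table R C) (P : Set (R × C)) (hP : ∀ e ∈ P, e ∉ T.sup)
    (hN1 : ∀ D : Set (R ⊕ C), IsCC (T.sup ∪ P) D →
      ∀ v ∈ D, ∀ w ∈ D, MutReach T (T.sup ∪ P) v w)
    (hN2 : ∀ D : Set (R ⊕ C), IsCC T.sup D → ∀ v ∈ D, ∀ w ∈ D, Conn P v w) :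
    TotallyProtected (T.addSup P) T.sup :=
  stmt9_general T P hP hN1 hN2
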